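/- There exist reals α, β with 0 ≤ α < 1 and β > 2 such that D(a) is bounded and D(b) is unbounded; consequently the associated subshift Σ does not have specification while still satisfying the hypothesis of the uniqueness theorem for equilibrium states. -/

import Mathlib

noncomputable section

namespace IntermediateBeta

/-- The intermediate beta transformation `x ↦ βx + α mod 1`. -/
def F (α β : ℝ) (x : ℝ) : ℝ := Int.fract (β * x + α)

/-- The digit sequence of a point: `Om α β x n` is the index `i` with `F^[n] x ∈ J_i`.
For `y ∈ [0,1)` we have `y ∈ J_i ↔ ⌊β y + α⌋ = i`. -/
def Om (α β : ℝ) (x : ℝ) : ℕ → ℕ := fun n => (⌊β * ((F α β)^[n] x) + α⌋).toNat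

/-- `ℓ = ⌈α + β⌉ - 1`. -/
def ell (α β : ℝ) : ℕ := ⌈α + β⌉₊ - 1

/-- The subshift `Σ`: closure (in the product topology) of the set of digit sequences
of points of `[0,1)`. -/
def Sig (α β : ℝ) : Set (ℕ → ℕ) := closure (Om α β '' Set.Ico (0 : ℝ) 1)

/-- The shift map. -/
def shift (x : ℕ → ℕ) : ℕ → ℕ := fun n => x (n + 1)

/-- Lexicographic order on one-sided sequences. -/
def lexLe (x y : ℕ → ℕ) : Prop := x = y ∨ ∃ k, (∀ i < k, x i = y i) ∧ x k < y k

/-- The language of a subset `S` of the full shift: the finite words occurring as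
initial segments of elements of `S`. -/
def langOf (S : Set (ℕ → ℕ)) (w : List ℕ) : Prop :=
  ∃ x ∈ S, ∀ i : Fin w.length, x i = w.get i

/-- Membership in the language `𝓛` of the subshift `Σ`. -/
def inLang (α β : ℝ) (w : List ℕ) : Prop := langOf (Sig α β) w

/-- The tail segment of `w` of length `k` agrees with the initial segment of `s`
of length `k`. -/
def tailAgrees (s : ℕ → ℕ) (w : List ℕ) (k : ℕ) : Prop :=
  k ≤ w.length ∧ ∀ i < k, w.getD (w.length - k + i) 0 = s i

/-- `kmax s w` is the length of the longest tail segment of `w` agreeing with an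
initial segment of `s` (`k₁(w)` when `s = a`, `k₂(w)` when `s = b`). -/
def kmax (s : ℕ → ℕ) (w : List ℕ) : ℕ := sSup {k | tailAgrees s w k}

/-- `D a b` is the set of lengths `n` such that the initial segment of `b` of
length `n` occurs somewhere in `a`.  Thus `D a b` is the set `𝖣(a)` of the paper
and `D b a` is `𝖣(b)`. -/
def D (a b : ℕ → ℕ) : Set ℕ := {n | ∃ j, ∀ i < n, b i = a (j + i)}

/-- Gluing of the words `w 0, v 0, w 1, v 1, …, v (n-1), w n`. -/
def glue {n : ℕ} (w : Fin (n + 1) → List ℕ) (v : Fin n → List ℕ) : List ℕ :=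
  (List.ofFn fun i : Fin n => w i.castSucc ++ v i).flatten ++ w (Fin.last n)

/-- A collection `G` of words inside the language `lang` has specification: there
is `τ ∈ ℕ` such that any finite list of words of `G` can be glued, with gluing
words from `lang` of length `τ`, into a word of `lang`. -/
def HasSpec (lang G : List ℕ → Prop) : Prop :=
  ∃ τ : ℕ, 1 ≤ τ ∧ ∀ n : ℕ, ∀ w : Fin (n + 1) → List ℕ, (∀ i, G (w i)) →
    ∃ v : Fin n → List ℕ, (∀ i, (v i).length = τ ∧ lang (v i)) ∧ lang (glue w v)

/-- The initial segment of a sequence, as a finite word. -/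
def pre (s : ℕ → ℕ) (n : ℕ) : List ℕ := List.ofFn fun i : Fin n => s i

/-- Lexicographic order for finite words (of equal length). -/
def wordLe (u v : List ℕ) : Prop :=
  u = v ∨ ∃ k, (∀ i < k, u.getD i 0 = v.getD i 0) ∧ u.getD k 0 < v.getD k 0

/-- Concatenation of a finite word with an infinite sequence. -/
def wcat (w : List ℕ) (x : ℕ → ℕ) : ℕ → ℕ := fun n =>
  if h : n < w.length then w.get ⟨n, h⟩ else x (n - w.length)

/-!
Take `α = 0`, so that `F` is the β-transformation and `a = Ω(0) = 0^∞`. Let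
`b = 2 1 1 0 1 0 0 0 1 …` (a `1` exactly at the powers of two) and choose `β ∈ (2, 3)` with
`∑ b_j β^{-(j+1)} = 1` by the intermediate value theorem. The tails
`t_n = ∑ b_{n+j} β^{-(j+1)}` satisfy `t_{n+1} = β t_n - b_n` and `0 < t_n ≤ 1`. The recursion
keeps the orbit of any `x ∈ [0,1)` below the tails for as long as its digits agree with `b`,
so `b` is the lexicographic maximum of `Σ`; and points just below `1` realise every prefix
of `b`, so `b ∈ Σ`. Since `b_0 ≠ 0`, `D(a) = {0}`, while the arbitrarily long zero blocks of `b`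
make `D(b)` unbounded and rule out specification.
-/

open Set Filter Topology

theorem lexLe_iff_toLex_le {x y : ℕ → ℕ} : lexLe x y ↔ toLex x ≤ toLex y := by
  rw [le_iff_eq_or_lt, toLex_inj]; rfl

theorem not_lexLe_iff {x y : ℕ → ℕ} :
    ¬ lexLe x y ↔ ∃ k, (∀ j < k, y j = x j) ∧ y k < x k := by
  rw [lexLe_iff_toLex_le, not_le]; rfl

theorem eventually_forall_le_eq (x : ℕ → ℕ) (k : ℕ) : ∀ᶠ y in 𝓝 x, ∀ j ≤ k, y j = x j := by
  simpa using (finite_Iic k).eventually_all.2 fun j _ =>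
    (continuous_apply j).continuousAt.eventually_mem (isOpen_discrete {x j} |>.mem_nhds rfl)

theorem isClosed_setOf_lexLe (b : ℕ → ℕ) : IsClosed {x : ℕ → ℕ | lexLe x b} := by
  refine isOpen_compl_iff.1 <| isOpen_iff_mem_nhds.2 fun x hx => ?_
  obtain ⟨k, hlt, hk⟩ := not_lexLe_iff.1 hx
  filter_upwards [eventually_forall_le_eq x k] with y hy
  refine not_lexLe_iff.2 ⟨k, fun j hj => ?_, ?_⟩
  · rw [hlt j hj, hy j hj.le]
  · rwa [hy k le_rfl]

theorem eq_zero_of_lexLe {x b : ℕ → ℕ} (hxb : lexLe x b) {N L : ℕ}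
    (hx : ∀ i < N, x i = b i) (hb : ∀ i < L, b (N + i) = 0) : ∀ i < L, x (N + i) = 0 := by
  intro i
  induction i using Nat.strong_induction_on with
  | _ i ih =>
    intro hi
    have hagree : ∀ j < N + i, x j = b j := fun j hj => by
      rcases lt_or_ge j N with hjN | hjN
      · exact hx j hjN
      · obtain ⟨m, rfl⟩ := Nat.exists_eq_add_of_le hjN
        rw [ih m (by omega) (by omega), hb m (by omega)]
    simpa [hb i hi] using Pi.apply_le_of_toLex (lexLe_iff_toLex_le.1 hxb) hagree

theorem langOf_pre {S : Set (ℕ → ℕ)} {b : ℕ → ℕ} (hb : b ∈ S) (n : ℕ) : langOf S (pre b n) :=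
  ⟨b, hb, fun ⟨i, hi⟩ => by simp [pre]⟩

/-- Gluing the prefix of `b` of length `N` to itself produces a word whose realisations `x`
satisfy `x (N + τ) = b 0 ≠ 0`, while `b` vanishes on `[N, N + τ]`; so `x` exceeds `b`. -/
theorem not_hasSpec_langOf {S : Set (ℕ → ℕ)} {b : ℕ → ℕ} (hb : b ∈ S)
    (hmax : ∀ x ∈ S, lexLe x b) (hb0 : b 0 ≠ 0)
    (hruns : ∀ L, ∃ N, 0 < N ∧ ∀ i < L, b (N + i) = 0) :
    ¬ HasSpec (langOf S) (langOf S) := by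
  rintro ⟨τ, -, hspec⟩
  obtain ⟨N, hN, hrun⟩ := hruns (τ + 1)
  obtain ⟨v, hv, x, hxS, hx⟩ := hspec 1 (fun _ => pre b N) fun _ => langOf_pre hb N
  have hglue : glue (fun _ : Fin 2 => pre b N) v = pre b N ++ v 0 ++ pre b N := by
    simp [glue]
  have hvlen : (v 0).length = τ := (hv 0).1
  rw [hglue] at hx
  have hx' : ∀ i (hi : i < N + τ + N), x i = (pre b N ++ v 0 ++ pre b N)[i]'(by
      simp [pre, hvlen]; omega) := fun i hi => hx ⟨i, by simp [pre, hvlen]; omega⟩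
  have hxb : ∀ i < N, x i = b i := fun i hi => by
    rw [hx' i (by omega), List.getElem_append_left (by simp [pre]; omega),
      List.getElem_append_left (by simp [pre]; omega)]
    simp [pre]
  have hxN : x (N + τ) = b 0 := by
    rw [hx' _ (by omega), List.getElem_append_right (by simp [pre, hvlen])]
    simp [pre, hvlen]
  have := eq_zero_of_lexLe (hmax x hxS) hxb hrun τ (by omega)
  exact hb0 (hxN ▸ this)

theorem D_zero_subset {b : ℕ → ℕ} (hb0 : b 0 ≠ 0) : D 0 b ⊆ {0} := by
  rintro n ⟨j, hj⟩
  by_contra hn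
  exact hb0 (hj 0 (Nat.pos_of_ne_zero hn))

theorem not_bddAbove_D_zero {b : ℕ → ℕ} (hruns : ∀ L, ∃ N, ∀ i < L, b (N + i) = 0) :
    ¬ BddAbove (D b 0) := by
  rintro ⟨M, hM⟩
  obtain ⟨N, hN⟩ := hruns (M + 1)
  have : M + 1 ≤ M := hM ⟨N, fun i hi => (hN i hi).symm⟩
  omega

def expSum (β : ℝ) (d : ℕ → ℕ) : ℝ := ∑' j, (d j : ℝ) * β⁻¹ ^ (j + 1)

section expSum

variable {β : ℝ} {d : ℕ → ℕ} {M : ℕ}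

theorem summable_inv_pow_succ (hβ : 1 < β) : Summable fun j : ℕ => β⁻¹ ^ (j + 1) :=
  (summable_nat_add_iff 1).2 <|
    summable_geometric_of_lt_one (by positivity) (inv_lt_one_of_one_lt₀ hβ)

theorem tsum_inv_pow_succ (hβ : 1 < β) : ∑' j : ℕ, β⁻¹ ^ (j + 1) = (β - 1)⁻¹ := by
  have hβ0 : β ≠ 0 := by positivity
  have hβ1 : β - 1 ≠ 0 := by linarith
  simp_rw [pow_succ', tsum_mul_left]
  rw [tsum_geometric_of_lt_one (by positivity) (inv_lt_one_of_one_lt₀ hβ)]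
  field_simp

theorem summable_expSum (hβ : 1 < β) (hd : ∀ j, d j ≤ M) :
    Summable fun j => (d j : ℝ) * β⁻¹ ^ (j + 1) :=
  .of_nonneg_of_le (fun j => by positivity)
    (fun j => mul_le_mul_of_nonneg_right (by exact_mod_cast hd j) (by positivity))
    ((summable_inv_pow_succ hβ).mul_left (M : ℝ))

theorem mul_expSum (hβ : 1 < β) (hd : ∀ j, d j ≤ M) :
    β * expSum β d = d 0 + expSum β (fun j => d (j + 1)) := by
  have hβ0 : β ≠ 0 := by positivity
  have hshift : ∀ j, (d (j + 1) : ℝ) * β⁻¹ ^ (j + 1 + 1) = β⁻¹ * (d (j + 1) * β⁻¹ ^ (j + 1)) :=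
    fun j => by ring
  rw [expSum, (summable_expSum hβ hd).tsum_eq_zero_add, tsum_congr hshift, tsum_mul_left, expSum]
  simp only [zero_add, pow_one]
  field_simp

theorem expSum_le (hβ : 1 < β) (hd : ∀ j, d j ≤ M) : expSum β d ≤ M * (β - 1)⁻¹ := by
  rw [← tsum_inv_pow_succ hβ, ← tsum_mul_left]
  exact (summable_expSum hβ hd).tsum_le_tsum
    (fun j => mul_le_mul_of_nonneg_right (by exact_mod_cast hd j) (by positivity))
    ((summable_inv_pow_succ hβ).mul_left (M : ℝ))

theorem expSum_pos (hβ : 1 < β) (hd : ∀ j, d j ≤ M) {j : ℕ} (hj : d j ≠ 0) :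
    0 < expSum β d :=
  (summable_expSum hβ hd).tsum_pos (fun j => by positivity) j
    (mul_pos (by exact_mod_cast Nat.pos_of_ne_zero hj) (by positivity))

theorem continuousOn_expSum {c : ℝ} (hc : 1 < c) (hd : ∀ j, d j ≤ M) :
    ContinuousOn (fun β => expSum β d) (Ici c) := by
  refine continuousOn_tsum (fun j => ?_) ((summable_inv_pow_succ hc).mul_left (M : ℝ))
    fun j β hβ => ?_
  · exact continuousOn_const.mul <|
      (continuousOn_id.inv₀ fun β hβ => (by simp at hβ; linarith : (0 : ℝ) < β).ne').pow _
  · have hβ0 : 0 < β := by simp at hβ; linarith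
    rw [Real.norm_eq_abs, abs_of_nonneg (by positivity)]
    gcongr
    · exact_mod_cast hd j
    · exact hβ

theorem expSum_tail_succ (hβ : 1 < β) (hd : ∀ j, d j ≤ M) (n : ℕ) :
    expSum β (fun j => d (n + 1 + j)) = β * expSum β (fun j => d (n + j)) - d n := by
  rw [mul_expSum hβ fun j => hd _]
  simp only [add_zero, add_right_comm n 1, add_assoc n _ 1]
  ring

end expSum

theorem mem_Sig_of_forall_exists_Om_eq {α β : ℝ} {b : ℕ → ℕ}
    (h : ∀ m, ∃ x ∈ Ico (0 : ℝ) 1, ∀ n < m, Om α β x n = b n) : b ∈ Sig α β := by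
  choose x hx hxb using h
  refine mem_closure_of_tendsto (f := fun m => Om α β (x m)) (b := atTop)
    (tendsto_pi_nhds.2 fun n => ?_) (Eventually.of_forall fun m => mem_image_of_mem _ (hx m))
  exact tendsto_atTop_of_eventually_const fun m (hm : n + 1 ≤ m) => hxb m n (by omega)

theorem lexLe_of_mem_Sig {α β : ℝ} {b : ℕ → ℕ} (h : ∀ x ∈ Ico (0 : ℝ) 1, lexLe (Om α β x) b)
    {y : ℕ → ℕ} (hy : y ∈ Sig α β) : lexLe y b :=
  closure_minimal (t := {y | lexLe y b}) (image_subset_iff.2 h) (isClosed_setOf_lexLe b) hy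

theorem Om_zero_zero (β : ℝ) : Om 0 β 0 = 0 := by
  have hfix : ∀ n, (F 0 β)^[n] 0 = 0 := fun n => Function.iterate_fixed (by simp [F]) n
  ext n
  simp [Om, hfix]

section betaShift

variable {β : ℝ}

theorem iterate_F_zero_nonneg {x : ℝ} (hx : 0 ≤ x) : ∀ n, 0 ≤ (F 0 β)^[n] x
  | 0 => hx
  | n + 1 => by rw [Function.iterate_succ_apply']; exact Int.fract_nonneg _

theorem iterate_F_zero_succ (hβ : 0 ≤ β) {x : ℝ} (hx : 0 ≤ x) (n : ℕ) :
    (F 0 β)^[n + 1] x = β * (F 0 β)^[n] x - Om 0 β x n := by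
  have hfloor : 0 ≤ ⌊β * (F 0 β)^[n] x + 0⌋ :=
    Int.floor_nonneg.2 (by have := iterate_F_zero_nonneg (β := β) hx n; positivity)
  have hcast : ((⌊β * (F 0 β)^[n] x + 0⌋.toNat : ℕ) : ℝ) = ⌊β * (F 0 β)^[n] x + 0⌋ := by
    exact_mod_cast Int.toNat_of_nonneg hfloor
  rw [Function.iterate_succ_apply', F, Int.fract, Om, hcast, add_zero]

theorem Om_zero_eq_of_mul_eq {x z : ℝ} {n c : ℕ} (h : β * (F 0 β)^[n] x = c + z)
    (hz0 : 0 ≤ z) (hz1 : z < 1) : Om 0 β x n = c := by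
  rw [Om, add_zero, h, Int.floor_natCast_add, Int.floor_eq_zero_iff.2 ⟨hz0, hz1⟩]
  simp

/-! Throughout, `t n` plays the role of the tail value `∑ j, b (n + j) β^{-(j+1)}`. -/

variable {b : ℕ → ℕ} {t : ℕ → ℝ}

theorem iterate_F_zero_lt (hβ : 0 < β) (hrec : ∀ n, t (n + 1) = β * t n - b n) {x : ℝ}
    (hx0 : 0 ≤ x) (hx : x < t 0) :
    ∀ {n}, (∀ i < n, Om 0 β x i = b i) → (F 0 β)^[n] x < t n := by
  intro n
  induction n with
  | zero => exact fun _ => hx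
  | succ n ih =>
    intro h
    rw [iterate_F_zero_succ hβ.le hx0, hrec, h n (by omega)]
    gcongr
    exact ih fun i hi => h i (by omega)

theorem lexLe_Om_zero (hβ : 0 < β) (hrec : ∀ n, t (n + 1) = β * t n - b n) (ht0 : t 0 = 1)
    (hle : ∀ n, t n ≤ 1) {x : ℝ} (hx : x ∈ Ico (0 : ℝ) 1) : lexLe (Om 0 β x) b := by
  by_contra hnot
  obtain ⟨k, hagree, hlt⟩ := not_lexLe_iff.1 hnot
  have hk : (F 0 β)^[k] x < t k :=
    iterate_F_zero_lt hβ hrec hx.1 (ht0 ▸ hx.2) fun i hi => (hagree i hi).symm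
  have hdigit : (Om 0 β x k : ℝ) < b k + 1 := by
    have := iterate_F_zero_nonneg (β := β) hx.1 (k + 1)
    rw [iterate_F_zero_succ hβ.le hx.1] at this
    linarith [mul_lt_mul_of_pos_left hk hβ, hrec k, hle (k + 1)]
  have : Om 0 β x k < b k + 1 := by exact_mod_cast hdigit
  omega

theorem exists_Om_zero_eq (hβ : 0 < β) (hrec : ∀ n, t (n + 1) = β * t n - b n)
    (ht0 : t 0 = 1) (hpos : ∀ n, 0 < t n) (hle : ∀ n, t n ≤ 1) (m : ℕ) :
    ∃ x ∈ Ico (0 : ℝ) 1, ∀ n < m, Om 0 β x n = b n := by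
  have hsmall : ∀ n, ∀ᶠ δ in 𝓝 (0 : ℝ), β ^ n * δ < t n := fun n =>
    ((continuous_const_mul (β ^ n)).tendsto' 0 0 (mul_zero _)).eventually (Iio_mem_nhds (hpos n))
  obtain ⟨δ, hδ, hδ0 : 0 < δ⟩ := (((finite_Iic m).eventually_all.2 fun n _ =>
    nhdsWithin_le_nhds (s := Ioi 0) (hsmall n)).and self_mem_nhdsWithin).exists
  have hδ1 : δ < 1 := by simpa [ht0] using hδ 0 (Nat.zero_le m)
  have horbit : ∀ n ≤ m, (F 0 β)^[n] (1 - δ) = t n - β ^ n * δ ∧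
      ∀ i < n, Om 0 β (1 - δ) i = b i := by
    intro n
    induction n with
    | zero => simp [ht0]
    | succ n ih =>
      intro hn
      obtain ⟨hy, hdigits⟩ := ih (by omega)
      have hmul : β * (F 0 β)^[n] (1 - δ) = b n + (t (n + 1) - β ^ (n + 1) * δ) := by
        rw [hy, hrec]; ring
      have hz0 : 0 ≤ t (n + 1) - β ^ (n + 1) * δ := by linarith [hδ (n + 1) hn]
      have hz1 : t (n + 1) - β ^ (n + 1) * δ < 1 := by
        have : 0 < β ^ (n + 1) * δ := by positivity
        linarith [hle (n + 1)]
      have hdigit := Om_zero_eq_of_mul_eq hmul hz0 hz1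
      refine ⟨?_, fun i hi => ?_⟩
      · rw [iterate_F_zero_succ hβ.le (by linarith) n, hmul, hdigit]; ring
      · rcases Nat.lt_succ_iff_lt_or_eq.1 hi with hi | rfl
        exacts [hdigits i hi, hdigit]
  exact ⟨1 - δ, ⟨by linarith, by linarith⟩, (horbit m le_rfl).2⟩

end betaShift

/-- The digits `2 1 1 0 1 0 0 0 1 …`: after the leading `2`, a `1` exactly at the powers of two. -/
def bseq (n : ℕ) : ℕ := if n = 0 then 2 else if n.isPowerOfTwo then 1 else 0

theorem bseq_zero : bseq 0 = 2 := rfl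

theorem bseq_le_two (n : ℕ) : bseq n ≤ 2 := by
  unfold bseq; split_ifs <;> omega

theorem bseq_le_one {n : ℕ} (hn : n ≠ 0) : bseq n ≤ 1 := by
  simp only [bseq, hn, if_false]; split_ifs <;> omega

theorem bseq_two_pow (k : ℕ) : bseq (2 ^ k) = 1 := by
  simp [bseq, Nat.isPowerOfTwo]

theorem exists_bseq_zero_run (L : ℕ) : ∃ N, 0 < N ∧ ∀ i < L, bseq (N + i) = 0 := by
  refine ⟨2 ^ (L + 1) + 1, by positivity, fun i hi => ?_⟩
  have hL : L + 1 < 2 ^ (L + 1) := Nat.lt_two_pow_self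
  have hpow : ¬ (2 ^ (L + 1) + 1 + i).isPowerOfTwo := by
    rintro ⟨k, hk⟩
    have h1 : L + 1 < k := (Nat.pow_lt_pow_iff_right one_lt_two).1 (by omega)
    have h2 : k < L + 2 := (Nat.pow_lt_pow_iff_right one_lt_two).1 (by rw [pow_succ]; omega)
    omega
  simp [bseq, hpow]

theorem exists_expSum_bseq_eq_one : ∃ β : ℝ, 2 < β ∧ expSum β bseq = 1 := by
  have hshift : ∀ j, bseq (j + 1) ≤ 1 := fun j => bseq_le_one (Nat.succ_ne_zero j)
  have hcont : ContinuousOn (fun β => expSum β bseq) (Icc 2 3) :=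
    (continuousOn_expSum one_lt_two bseq_le_two).mono Icc_subset_Ici_self
  have hlt : expSum 3 bseq < 1 := by
    have hmul := mul_expSum (by norm_num : (1 : ℝ) < 3) bseq_le_two
    have htail := expSum_le (by norm_num : (1 : ℝ) < 3) hshift
    rw [bseq_zero] at hmul
    norm_num at hmul htail
    linarith
  have hgt : 1 < expSum 2 bseq := by
    have hmul := mul_expSum one_lt_two bseq_le_two
    have htail := expSum_pos one_lt_two hshift (j := 0)
      (by simpa using (bseq_two_pow 0).trans_ne one_ne_zero)
    rw [bseq_zero] at hmul
    push_cast at hmul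
    linarith
  obtain ⟨β, hβ, hβ1⟩ := intermediate_value_Ioo' (by norm_num) hcont ⟨hlt, hgt⟩
  exact ⟨β, hβ.1, hβ1⟩

theorem expSum_bseq_tail_pos {β : ℝ} (hβ : 1 < β) (n : ℕ) :
    0 < expSum β (fun j => bseq (n + j)) := by
  have hn : n ≤ 2 ^ n := Nat.lt_two_pow_self.le
  refine expSum_pos hβ (fun j => bseq_le_two _) (j := 2 ^ n - n) ?_
  rw [Nat.add_sub_cancel' hn, bseq_two_pow]
  exact one_ne_zero

theorem expSum_bseq_tail_le_one {β : ℝ} (hβ : 2 ≤ β) (h1 : expSum β bseq = 1) (n : ℕ) :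
    expSum β (fun j => bseq (n + j)) ≤ 1 := by
  rcases Nat.eq_zero_or_pos n with rfl | hn
  · simp [h1]
  · calc expSum β (fun j => bseq (n + j)) ≤ ((1 : ℕ) : ℝ) * (β - 1)⁻¹ :=
          expSum_le (β := β) (by linarith) fun j => bseq_le_one (n := n + j) (by omega)
      _ ≤ 1 := by rw [Nat.cast_one, one_mul]; exact inv_le_one_of_one_le₀ (by linarith)

/-- **Example.** There exist `0 ≤ α < 1` and `β > 2` such that `𝖣(a)` is bounded
while `𝖣(b)` is unbounded; consequently the associated subshift `Σ` does not
have specification while still satisfying the hypothesis of the uniqueness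
theorem for equilibrium states. -/
theorem exists_bounded_Da_unbounded_Db :
    ∃ α β : ℝ, 0 ≤ α ∧ α < 1 ∧ 2 < β ∧
      ∃ b : ℕ → ℕ, b ∈ Sig α β ∧ (∀ x ∈ Sig α β, lexLe x b) ∧
        BddAbove (D (Om α β 0) b) ∧ ¬ BddAbove (D b (Om α β 0)) ∧
        ¬ HasSpec (inLang α β) (inLang α β) := by
  obtain ⟨β, hβ, hβ1⟩ := exists_expSum_bseq_eq_one
  have hβ0 : 0 < β := by linarith
  have hrec (n : ℕ) := expSum_tail_succ (β := β) (by linarith) bseq_le_two n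
  have ht0 : expSum β (fun j => bseq (0 + j)) = 1 := by simpa using hβ1
  have hpos := expSum_bseq_tail_pos (by linarith : 1 < β)
  have hle := expSum_bseq_tail_le_one hβ.le hβ1
  have hmax : ∀ x ∈ Sig 0 β, lexLe x bseq := fun x hx =>
    lexLe_of_mem_Sig (fun y hy => lexLe_Om_zero hβ0 hrec ht0 hle hy) hx
  have hmem : bseq ∈ Sig 0 β :=
    mem_Sig_of_forall_exists_Om_eq (exists_Om_zero_eq hβ0 hrec ht0 hpos hle)
  have hb0 : bseq 0 ≠ 0 := by rw [bseq_zero]; exact two_ne_zero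
  refine ⟨0, β, le_rfl, one_pos, hβ, bseq, hmem, hmax, ?_, ?_,
    not_hasSpec_langOf hmem hmax hb0 exists_bseq_zero_run⟩
  · rw [Om_zero_zero]
    exact bddAbove_singleton.mono (D_zero_subset hb0)
  · rw [Om_zero_zero]
    exact not_bddAbove_D_zero fun L => (exists_bseq_zero_run L).imp fun _ h => h.2

end IntermediateBeta
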